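/- arXiv:2504.07591 — 5 statements merged into one kernel-verified Lean document; each statement's English description precedes it below -/
import Mathlib

section
/- Let R = ℂ[y_0,...,y_n] and let g_0,...,g_d ∈ R. For an integer a ≥ 2, define the R-module homomorphism A_a : R^{a+d-1} → R^{a-1} by A_a((f_k)_{k=1}^{a+d-1}) = (g_0 f_k + g_1 f_{k+1} + ... + g_d f_{k+d})_{k=1}^{a-1}. Then for any (f_m)_{m=1}^{a+d-1} ∈ ker A_a and any 1 ≤ k ≤ d, the tuple (f'_m)_{m=1}^{a+d} defined by f'_m = f_m g_k + ... + f_{m+d-k} g_d for m = 1,...,a+k-1 and f'_m = -f_{m-k} g_0 - ... - f_{m-1} g_{k-1} for m = k+1,...,a+d (these two definitions agreeing on the overlap) lies in ker A_{a+1}. -/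
open MvPolynomial

/-- Let `R = ℂ[y_0, …, y_n]` and `g_0, …, g_d ∈ R` (with `g_j = 0` for
`j > d`).  For `a ≥ 2` the banded map `A_a : R^{a+d-1} → R^{a-1}` is encoded by indexing
tuples as functions `f : ℤ → R` supported on `[1, a+d-1]`, the kernel condition being
`Σ_{j=0}^{d} g_j f(s+j) = 0` for `1 ≤ s ≤ a-1`.  For `1 ≤ k ≤ d` and `f ∈ ker A_a`,
the two formulas `f'_m = Σ_{j=0}^{d-k} g_{k+j} f_{m+j}` (for `m ≤ a+k-1`) and
`f'_m = -Σ_{j=0}^{k-1} g_j f_{m-k+j}` (for `m ≥ k+1`) agree on the overlap, and the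
resulting tuple `(f'_m)_{m=1}^{a+d}` lies in `ker A_{a+1}`. -/
theorem stmt_1 (n d a : ℕ) (ha : 2 ≤ a) (hd : 1 ≤ d)
    (g : ℕ → MvPolynomial (Fin (n + 1)) ℂ) (hg : ∀ j, d < j → g j = 0)
    (k : ℕ) (hk1 : 1 ≤ k) (hkd : k ≤ d)
    (f : ℤ → MvPolynomial (Fin (n + 1)) ℂ)
    (hsupp : ∀ m : ℤ, m < 1 ∨ (a : ℤ) + d - 1 < m → f m = 0)
    (hker : ∀ s : ℤ, 1 ≤ s → s ≤ (a : ℤ) - 1 →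
      ∑ j ∈ Finset.range (d + 1), g j * f (s + j) = 0) :
    (∀ m : ℤ, (k : ℤ) + 1 ≤ m → m ≤ (a : ℤ) + k - 1 →
      (∑ j ∈ Finset.range (d - k + 1), g (k + j) * f (m + j)) =
        -(∑ j ∈ Finset.range k, g j * f (m - k + j))) ∧
    (let f' : ℤ → MvPolynomial (Fin (n + 1)) ℂ := fun m =>
        if 1 ≤ m ∧ m ≤ (a : ℤ) + d then
          (if m ≤ (a : ℤ) + k - 1 then
            ∑ j ∈ Finset.range (d - k + 1), g (k + j) * f (m + j)
          else -(∑ j ∈ Finset.range k, g j * f (m - k + j)))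
        else 0
      ∀ s : ℤ, 1 ≤ s → s ≤ (a : ℤ) →
        ∑ j ∈ Finset.range (d + 1), g j * f' (s + j) = 0) := by
  -- `key m` : the full convolution sum at `m - k` splits at index `k`.
  have key : ∀ m : ℤ,
      (∑ j ∈ Finset.range (d + 1), g j * f (m - k + j)) =
      (∑ j ∈ Finset.range k, g j * f (m - k + j)) +
      ∑ j ∈ Finset.range (d - k + 1), g (k + j) * f (m + j) := by
    intro m
    have hdk : d + 1 = k + (d - k + 1) := by omega
    rw [hdk, Finset.sum_range_add]
    congr 1
    refine Finset.sum_congr rfl fun j hj => ?_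
    congr 1
    push_cast
    ring
  constructor
  · intro m hm1 hm2
    have h0 : (∑ j ∈ Finset.range (d + 1), g j * f (m - k + j)) = 0 :=
      hker (m - k) (by omega) (by omega)
    linear_combination h0 - key m
  · intro f' s hs1 hs2
    have hf'def : ∀ m : ℤ, f' m =
        if 1 ≤ m ∧ m ≤ (a : ℤ) + d then
          (if m ≤ (a : ℤ) + k - 1 then
            ∑ j ∈ Finset.range (d - k + 1), g (k + j) * f (m + j)
          else -(∑ j ∈ Finset.range k, g j * f (m - k + j)))
        else 0 := fun m => rfl
    -- rewrite each `f' (s + j)` in a uniform way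
    have hval : ∀ j ∈ Finset.range (d + 1), f' (s + j) =
        -(∑ i ∈ Finset.range k, g i * f (s + j - k + i)) +
        (if s + (j : ℤ) ≤ (a : ℤ) + k - 1 then
          ∑ i ∈ Finset.range (d + 1), g i * f (s + j - k + i) else 0) := by
      intro j hj
      simp only [Finset.mem_range] at hj
      rw [hf'def]
      rw [if_pos (by constructor <;> omega)]
      by_cases hc : s + (j : ℤ) ≤ (a : ℤ) + k - 1
      · rw [if_pos hc, if_pos hc]
        linear_combination -key (s + (j : ℤ))
      · rw [if_neg hc, if_neg hc]
        ring
    have step1 : ∑ j ∈ Finset.range (d + 1), g j * f' (s + j) =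
        (∑ j ∈ Finset.range (d + 1),
          g j * -(∑ i ∈ Finset.range k, g i * f (s + j - k + i))) +
        ∑ j ∈ Finset.range (d + 1),
          g j * (if s + (j : ℤ) ≤ (a : ℤ) + k - 1 then
            ∑ i ∈ Finset.range (d + 1), g i * f (s + j - k + i) else 0) := by
      rw [← Finset.sum_add_distrib]
      refine Finset.sum_congr rfl fun j hj => ?_
      rw [hval j hj, mul_add]
    rw [step1]
    -- the second summand: only the indices `j < k` survive
    have hQ : (∑ j ∈ Finset.range (d + 1),
          g j * (if s + (j : ℤ) ≤ (a : ℤ) + k - 1 then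
            ∑ i ∈ Finset.range (d + 1), g i * f (s + j - k + i) else 0)) =
        ∑ j ∈ Finset.range k,
          g j * ∑ i ∈ Finset.range (d + 1), g i * f (s + j - k + i) := by
      have h1 : ∀ j ∈ Finset.range (d + 1),
          g j * (if s + (j : ℤ) ≤ (a : ℤ) + k - 1 then
            ∑ i ∈ Finset.range (d + 1), g i * f (s + j - k + i) else 0) =
          (if j < k then
            g j * ∑ i ∈ Finset.range (d + 1), g i * f (s + j - k + i) else 0) := by
        intro j hj
        simp only [Finset.mem_range] at hj
        by_cases hjk : j < k
        · rw [if_pos hjk, if_pos (by omega)]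
        · rw [if_neg hjk]
          by_cases hc : s + (j : ℤ) ≤ (a : ℤ) + k - 1
          · rw [if_pos hc, hker (s + (j : ℤ) - k) (by omega) (by omega), mul_zero]
          · rw [if_neg hc, mul_zero]
      rw [Finset.sum_congr rfl h1]
      rw [← Finset.sum_subset (Finset.range_subset_range.2 (by omega) :
            Finset.range k ⊆ Finset.range (d + 1))
          (fun x _ hx => if_neg (by simp only [Finset.mem_range] at hx; omega))]
      exact Finset.sum_congr rfl fun j hj =>
        if_pos (Finset.mem_range.mp hj)
    -- the first summand is the negative of the same thing, by swapping sums
    have hP : (∑ j ∈ Finset.range (d + 1),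
          g j * -(∑ i ∈ Finset.range k, g i * f (s + j - k + i))) =
        -(∑ j ∈ Finset.range k,
          g j * ∑ i ∈ Finset.range (d + 1), g i * f (s + j - k + i)) := by
      simp only [Finset.mul_sum, mul_neg, ← Finset.sum_neg_distrib]
      rw [Finset.sum_comm]
      refine Finset.sum_congr rfl fun i _ => Finset.sum_congr rfl fun j _ => ?_
      have harg : s + (j : ℤ) - k + i = s + (i : ℤ) - k + j := by ring
      rw [harg]
      ring
    rw [hP, hQ]
    ring
end

section
/- Let S be a commutative ring and g_0, g_1, ..., g_d ∈ S (d ≥ 1). In the polynomial ring U' = S[W_1,...,W_d], for all 0 ≤ k < k' < k'' ≤ d, the element g_k (W_{k'+1} W_{k''} - W_{k'} W_{k''+1}) - g_{k'} (W_{k+1} W_{k''} - W_k W_{k''+1}) + g_{k''} (W_{k+1} W_{k'} - W_k W_{k'+1}) lies in the ideal of U = S[X_0, X_1, W_1,...,W_d] generated by X_1 W_1 + g_0, X_1 W_{j+1} + g_j - X_0 W_j (1 ≤ j ≤ d-1), and g_d - X_0 W_d, where by convention W_0 = W_{d+1} = 0. -/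
open MvPolynomial

/-- Let `S` be a commutative ring and `g_0, …, g_d ∈ S` (`d ≥ 1`).
In `U = S[X₀, X₁, W₁, …, W_d]` (variables indexed by `Fin 2 ⊕ Fin d`, convention
`W_0 = W_{d+1} = 0`), for all `0 ≤ k < k' < k'' ≤ d` the Plücker-type element
`g_k (W_{k'+1} W_{k''} - W_{k'} W_{k''+1}) - g_{k'} (W_{k+1} W_{k''} - W_k W_{k''+1})
 + g_{k''} (W_{k+1} W_{k'} - W_k W_{k'+1})`
lies in the ideal generated by the `d+1` elements `X₁ W_{j+1} + g_j - X₀ W_j`,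
`j = 0, …, d`. -/
theorem stmt_4 (S : Type*) [CommRing S] (d : ℕ) (hd : 1 ≤ d) (g : ℕ → S) :
    let U := MvPolynomial (Fin 2 ⊕ Fin d) S
    let X0 : U := X (Sum.inl 0)
    let X1 : U := X (Sum.inl 1)
    let W : ℕ → U := fun m =>
      if h : 1 ≤ m ∧ m ≤ d then X (Sum.inr ⟨m - 1, by omega⟩) else 0
    ∀ k k' k'' : ℕ, k < k' → k' < k'' → k'' ≤ d →
      C (g k) * (W (k' + 1) * W k'' - W k' * W (k'' + 1)) -
        C (g k') * (W (k + 1) * W k'' - W k * W (k'' + 1)) +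
        C (g k'') * (W (k + 1) * W k' - W k * W (k' + 1)) ∈
      Ideal.span {p : U | ∃ j ≤ d, p = X1 * W (j + 1) + C (g j) - X0 * W j} := by
  intro U X0 X1 W k k' k'' h1 h2 h3
  set I := Ideal.span {p : U | ∃ j ≤ d, p = X1 * W (j + 1) + C (g j) - X0 * W j}
  have hF : ∀ j, j ≤ d → (X1 * W (j + 1) + C (g j) - X0 * W j) ∈ I := by
    intro j hj
    exact Ideal.subset_span ⟨j, hj, rfl⟩
  have key :
      C (g k) * (W (k' + 1) * W k'' - W k' * W (k'' + 1)) -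
        C (g k') * (W (k + 1) * W k'' - W k * W (k'' + 1)) +
        C (g k'') * (W (k + 1) * W k' - W k * W (k' + 1)) =
      (X1 * W (k + 1) + C (g k) - X0 * W k) *
          (W (k' + 1) * W k'' - W k' * W (k'' + 1)) -
        (X1 * W (k' + 1) + C (g k') - X0 * W k') *
          (W (k + 1) * W k'' - W k * W (k'' + 1)) +
        (X1 * W (k'' + 1) + C (g k'') - X0 * W k'') *
          (W (k + 1) * W k' - W k * W (k' + 1)) := by
    ring
  rw [key]
  exact Ideal.add_mem I
    (Ideal.sub_mem I
      (Ideal.mul_mem_right _ _ (hF k (by omega)))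
      (Ideal.mul_mem_right _ _ (hF k' (by omega))))
    (Ideal.mul_mem_right _ _ (hF k'' h3))
end

section
/- Let R be a commutative ring and g_0,...,g_d ∈ R with d ≥ 1. In T = R[X_0,X_1,Z_1,...,Z_d], modulo the ideal I generated by X_1 Z_1 + g_0, X_1 Z_{k+1} + g_k - X_0 Z_k (1 ≤ k ≤ d-1), and g_d - X_0 Z_d, every monomial of the form X_0^{α_0} X_1^{α_1} Z_1^{β_1} ⋯ Z_d^{β_d} with α_0 + α_1 - β_1 - ⋯ - β_d > d - 2 is congruent to a polynomial in R[X_0, X_1] (i.e. involving no Z variables). -/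
open MvPolynomial

/-- Let `R` be a commutative ring, `g_0, …, g_d ∈ R` with `d ≥ 1`, and
`T = R[X₀, X₁, Z₁, …, Z_d]` with the ideal `I` generated by `X₁ Z_{k+1} + g_k - X₀ Z_k`
for `k = 0, …, d` (convention `Z_0 = Z_{d+1} = 0`).  Then every monomial
`X₀^{α₀} X₁^{α₁} Z₁^{β₁} ⋯ Z_d^{β_d}` with `α₀ + α₁ - β₁ - ⋯ - β_d > d - 2` is congruent
modulo `I` to a polynomial in `R[X₀, X₁]`, i.e. involving no `Z` variables. -/
theorem stmt_10 (R : Type*) [CommRing R] (d : ℕ) (hd : 1 ≤ d) (g : ℕ → R)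
    (α₀ α₁ : ℕ) (β : Fin d → ℕ)
    (hdeg : (d : ℤ) - 2 < (α₀ : ℤ) + α₁ - ∑ m, (β m : ℤ)) :
    let T := MvPolynomial (Fin 2 ⊕ Fin d) R
    let X0 : T := X (Sum.inl 0)
    let X1 : T := X (Sum.inl 1)
    let Z : ℕ → T := fun m =>
      if h : 1 ≤ m ∧ m ≤ d then X (Sum.inr ⟨m - 1, by omega⟩) else 0
    let I : Ideal T := Ideal.span {p : T | ∃ j ≤ d, p = X1 * Z (j + 1) + C (g j) - X0 * Z j}
    ∃ q : MvPolynomial (Fin 2) R,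
      X0 ^ α₀ * X1 ^ α₁ * (∏ m : Fin d, X (Sum.inr m) ^ β m) - rename Sum.inl q ∈ I := by
  intro T X0 X1 Z I
  have hβ : (∑ m, (β m : ℤ)) = ((∑ m, β m : ℕ) : ℤ) := by push_cast; rfl
  have hab0 : (∑ m, β m) + d ≤ α₀ + α₁ + 1 := by
    rw [hβ] at hdeg; omega
  clear hdeg hβ
  have hX0v : X0 = X (Sum.inl 0) := rfl
  have hX1v : X1 = X (Sum.inl 1) := rfl
  have hZdef : ∀ mm : ℕ, Z mm =
      if h : 1 ≤ mm ∧ mm ≤ d then X (Sum.inr ⟨mm - 1, by omega⟩) else 0 := fun _ => rfl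
  have hgen : ∀ j, j ≤ d → X1 * Z (j+1) + C (g j) - X0 * Z j ∈ I :=
    fun j hj => Ideal.subset_span ⟨j, hj, rfl⟩
  have hZ0 : Z (d+1) = 0 := by rw [hZdef]; exact dif_neg (by omega)
  have hZz : Z 0 = 0 := by rw [hZdef]; exact dif_neg (by omega)
  have hZm : ∀ m : Fin d, Z ((m : ℕ) + 1) = X (Sum.inr m) := by
    intro mm
    rw [hZdef, dif_pos ⟨by omega, mm.isLt⟩]
    simp
  set Sp : T → Prop := fun p => ∃ q : MvPolynomial (Fin 2) R, p - rename Sum.inl q ∈ I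
    with hSp
  have Seq : ∀ p p' : T, p = p' → Sp p' → Sp p := fun p p' h hp => h ▸ hp
  have Sclosed : ∀ p p' : T, p - p' ∈ I → Sp p' → Sp p := by
    rintro p p' h ⟨q, hq⟩
    refine ⟨q, ?_⟩
    have := I.add_mem h hq
    rwa [sub_add_sub_cancel] at this
  have Sadd : ∀ p p' : T, Sp p → Sp p' → Sp (p + p') := by
    rintro p p' ⟨q, hq⟩ ⟨q', hq'⟩
    refine ⟨q + q', ?_⟩
    have := I.add_mem hq hq'
    convert this using 1
    rw [map_add]; ring
  have SmulC : ∀ (c : R) (p : T), Sp p → Sp (C c * p) := by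
    rintro c p ⟨q, hq⟩
    refine ⟨C c * q, ?_⟩
    have := I.mul_mem_left (C c) hq
    convert this using 1
    rw [map_mul, rename_C]; ring
  have Sneg : ∀ p : T, Sp p → Sp (-p) := by
    rintro p ⟨q, hq⟩
    refine ⟨-q, ?_⟩
    have := I.neg_mem hq
    convert this using 1
    rw [map_neg]; ring
  have Sfree : ∀ a b : ℕ, Sp (X0 ^ a * X1 ^ b) := by
    intro a b
    refine ⟨X 0 ^ a * X 1 ^ b, ?_⟩
    have h : (rename (R := R) Sum.inl) (X 0 ^ a * X 1 ^ b) = X0 ^ a * X1 ^ b := by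
      rw [hX0v, hX1v]; simp [map_mul, map_pow, rename_X]
    rw [h, sub_self]
    exact I.zero_mem
  have rel1 : ∀ j, j ≤ d → ∀ p : T,
      Sp (p * (X1 * Z (j+1)) + p * C (g j)) → Sp (p * (X0 * Z j)) := by
    intro j hj p h
    refine Sclosed _ _ ?_ h
    have := I.neg_mem (I.mul_mem_left p (hgen j hj))
    convert this using 1
    ring
  have rel2 : ∀ j, j ≤ d → ∀ p : T,
      Sp (p * (X0 * Z j) - p * C (g j)) → Sp (p * (X1 * Z (j+1))) := by
    intro j hj p h
    refine Sclosed _ _ ?_ h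
    have := I.mul_mem_left p (hgen j hj)
    convert this using 1
    ring
  have key : ∀ n : ℕ, ∀ a b : ℕ, ∀ γ : Fin d → ℕ, (∑ m, γ m) = n → n + d ≤ a + b + 1 →
      Sp (X0 ^ a * X1 ^ b * ∏ m, X (Sum.inr m) ^ γ m) := by
    intro n
    induction n using Nat.strong_induction_on with
    | _ n IH =>
      intro a b γ hγ hab
      rcases Nat.eq_zero_or_pos n with h0 | hpos
      · have hz : ∀ m, γ m = 0 := by
          subst h0
          intro m
          exact Finset.sum_eq_zero_iff.mp hγ m (Finset.mem_univ m)
        refine Seq _ (X0 ^ a * X1 ^ b) ?_ (Sfree a b)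
        simp [hz]
      · obtain ⟨m, hm⟩ : ∃ m, 0 < γ m := by
          by_contra hc
          push_neg at hc
          simp only [Nat.le_zero] at hc
          rw [Finset.sum_eq_zero (fun m _ => hc m)] at hγ
          omega
        set γ' : Fin d → ℕ := Function.update γ m (γ m - 1) with hγ'def
        have hne : ∀ x : Fin d, x ≠ m → γ' x = γ x :=
          fun x hx => Function.update_of_ne hx _ _
        have h4 : γ' m = γ m - 1 := Function.update_self _ _ _
        have hsum' : (∑ m', γ' m') = n - 1 := by
          have h1 := Finset.add_sum_erase Finset.univ γ (Finset.mem_univ m)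
          have h2 := Finset.add_sum_erase Finset.univ γ' (Finset.mem_univ m)
          have h3 : ∑ x ∈ Finset.univ.erase m, γ' x = ∑ x ∈ Finset.univ.erase m, γ x :=
            Finset.sum_congr rfl fun x hx => hne x (Finset.ne_of_mem_erase hx)
          omega
        have hprod : (∏ m', X (Sum.inr m') ^ γ m' : T) =
            X (Sum.inr m) * ∏ m', X (Sum.inr m') ^ γ' m' := by
          have h1 := Finset.mul_prod_erase Finset.univ
            (fun m' => (X (Sum.inr m') ^ γ m' : T)) (Finset.mem_univ m)
          have h2 := Finset.mul_prod_erase Finset.univ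
            (fun m' => (X (Sum.inr m') ^ γ' m' : T)) (Finset.mem_univ m)
          have h3 : ∏ x ∈ Finset.univ.erase m, (X (Sum.inr x) ^ γ' x : T) =
              ∏ x ∈ Finset.univ.erase m, (X (Sum.inr x) ^ γ x : T) :=
            Finset.prod_congr rfl fun x hx => by rw [hne x (Finset.ne_of_mem_erase hx)]
          rw [← h1, ← h2, h3]
          simp only [h4]
          rw [← mul_assoc, ← pow_succ']
          have h5 : γ m - 1 + 1 = γ m := by omega
          rw [h5]
        set P : T := ∏ m', X (Sum.inr m') ^ γ' m' with hP
        have Up : ∀ t : ℕ, t + 1 ≤ d → ∀ a b : ℕ, t < a → (n-1) + d ≤ a + b →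
            Sp (X0 ^ a * X1 ^ b * (Z (d - t) * P)) := by
          intro t
          induction t with
          | zero =>
            intro _ a b ha hab'
            obtain ⟨a', rfl⟩ : ∃ a', a = a' + 1 := ⟨a - 1, by omega⟩
            refine Seq _ ((X0 ^ a' * X1 ^ b * P) * (X0 * Z d))
              (by simp only [Nat.sub_zero]; ring) ?_
            refine rel1 d le_rfl _ ?_
            rw [hZ0]
            refine Seq _ (C (g d) * (X0 ^ a' * X1 ^ b * P)) (by ring) ?_
            exact SmulC _ _ (IH (n-1) (by omega) a' b γ' hsum' (by omega))
          | succ t iht =>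
            intro ht a b ha hab'
            obtain ⟨a', rfl⟩ : ∃ a', a = a' + 1 := ⟨a - 1, by omega⟩
            refine Seq _ ((X0 ^ a' * X1 ^ b * P) * (X0 * Z (d - (t+1)))) (by ring) ?_
            refine rel1 (d - (t+1)) (by omega) _ ?_
            have hidx : d - (t+1) + 1 = d - t := by omega
            rw [hidx]
            refine Sadd _ _ ?_ ?_
            · refine Seq _ (X0 ^ a' * X1 ^ (b+1) * (Z (d - t) * P)) (by ring) ?_
              exact iht (by omega) a' (b+1) (by omega) (by omega)
            · refine Seq _ (C (g (d - (t+1))) * (X0 ^ a' * X1 ^ b * P)) (by ring) ?_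
              exact SmulC _ _ (IH (n-1) (by omega) a' b γ' hsum' (by omega))
        have Down : ∀ t : ℕ, t + 1 ≤ d → ∀ a b : ℕ, t < b → (n-1) + d ≤ a + b →
            Sp (X0 ^ a * X1 ^ b * (Z (t+1) * P)) := by
          intro t
          induction t with
          | zero =>
            intro _ a b hb hab'
            obtain ⟨b', rfl⟩ : ∃ b', b = b' + 1 := ⟨b - 1, by omega⟩
            refine Seq _ ((X0 ^ a * X1 ^ b' * P) * (X1 * Z (0+1))) (by ring) ?_
            refine rel2 0 (by omega) _ ?_
            rw [hZz]
            refine Seq _ (-(C (g 0) * (X0 ^ a * X1 ^ b' * P))) (by ring) ?_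
            exact Sneg _ (SmulC _ _ (IH (n-1) (by omega) a b' γ' hsum' (by omega)))
          | succ t iht =>
            intro ht a b hb hab'
            obtain ⟨b', rfl⟩ : ∃ b', b = b' + 1 := ⟨b - 1, by omega⟩
            refine Seq _ ((X0 ^ a * X1 ^ b' * P) * (X1 * Z (t+1+1))) (by ring) ?_
            refine rel2 (t+1) (by omega) _ ?_
            refine Seq _ (X0 ^ (a+1) * X1 ^ b' * (Z (t+1) * P) +
              -(C (g (t+1)) * (X0 ^ a * X1 ^ b' * P))) (by ring) ?_
            refine Sadd _ _ ?_ ?_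
            · exact iht (by omega) (a+1) b' (by omega) (by omega)
            · exact Sneg _ (SmulC _ _ (IH (n-1) (by omega) a b' γ' hsum' (by omega)))
        have hmlt : (m : ℕ) < d := m.isLt
        have hcase : d + 1 ≤ a + ((m : ℕ) + 1) ∨ (m : ℕ) + 1 ≤ b := by omega
        refine Seq _ (X0 ^ a * X1 ^ b * (X (Sum.inr m) * P)) (by rw [hprod]) ?_
        rcases hcase with hc | hc
        · have h5 : d - (d - ((m : ℕ) + 1)) = (m : ℕ) + 1 := by omega
          have hu := Up (d - ((m : ℕ) + 1)) (by omega) a b (by omega) (by omega)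
          rw [h5, hZm m] at hu
          exact hu
        · have hdn := Down (m : ℕ) (by omega) a b (by omega) (by omega)
          rw [hZm m] at hdn
          exact hdn
  exact key (∑ m, β m) α₀ α₁ β rfl hab0
end

section
/- Let Z ⊂ ℙ^1 × ℙ^n (n ≥ 3) be a smooth hypersurface defined by r = g_0 x_0^d + g_1 x_0^{d-1}x_1 + ... + g_d x_1^d with g_i ∈ ℂ[y_0,...,y_n] homogeneous of degree e. Then for each k = 1,...,d, the rational function z_k = (g_k x_0^{d-k} + g_{k+1} x_0^{d-k-1} x_1 + ... + g_d x_1^{d-k}) / x_0^{d-k+1}, which on Z also equals -(g_0 x_0^{k-1} + ... + g_{k-1} x_1^{k-1})/x_1^k, is a global section of O_Z(-1, e), and these sections satisfy x_1 z_{k+1} + g_k - x_0 z_k = 0 on Z for k = 0,...,d with the convention z_0 = z_{d+1} = 0. -/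
open MvPolynomial Finset

/-!
Write `r = Σ_c a_c x^(d-c) y^c`. Splitting the sum at `c = k` and factoring `y^k` out of the
upper part and `x^(d-k+1)` out of the lower part gives `r = y^k N₁(k) + x^(d-k+1) N₂(k)`, so on
`r = 0` the two expressions `N₁(k)/x^(d-k+1)` and `-N₂(k)/y^k` agree. Peeling off the term
`c = k` of `N₁(k)` gives the recursion `N₁(k) = y N₁(k+1) + a_k x^(d-k)`.
-/

namespace BinaryForm

variable {R : Type*} [CommSemiring R] (a : ℕ → R) (x y : R) (d : ℕ)

def eval : R := ∑ c ∈ range (d + 1), a c * x ^ (d - c) * y ^ c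

/-- `N₁(k)` of the statement. -/
def tail (k : ℕ) : R := ∑ c ∈ Icc k d, a c * x ^ (d - c) * y ^ (c - k)

/-- `N₂(k)` of the statement. -/
def head (k : ℕ) : R := ∑ c ∈ range k, a c * x ^ (k - 1 - c) * y ^ c

variable {d}

theorem pow_mul_tail_add_pow_mul_head {k : ℕ} (hk : k ≤ d) :
    y ^ k * tail a x y d k + x ^ (d - k + 1) * head a x y k = eval a x y d := by
  rw [eval, ← sum_range_add_sum_Ico _ (by omega : k ≤ d + 1), add_comm, tail, head, mul_sum,
    mul_sum, Ico_add_one_right_eq_Icc]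
  congr 1
  · refine sum_congr rfl fun c hc => ?_
    rw [show d - c = (d - k + 1) + (k - 1 - c) by rw [mem_range] at hc; omega, pow_add]
    ring
  · refine sum_congr rfl fun c hc => ?_
    obtain ⟨j, rfl⟩ := Nat.exists_eq_add_of_le (mem_Icc.mp hc).1
    rw [Nat.add_sub_cancel_left, pow_add]
    ring

theorem mul_tail_succ_add {k : ℕ} (hk : k ≤ d) :
    y * tail a x y d (k + 1) + a k * x ^ (d - k) = tail a x y d k := by
  rw [tail, tail, ← insert_Icc_add_one_left_eq_Icc hk, sum_insert (by simp), Nat.sub_self,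
    pow_zero, mul_one, add_comm, mul_sum]
  congr 1
  refine sum_congr rfl fun c hc => ?_
  rw [show c - k = (c - (k + 1)) + 1 by rw [mem_Icc] at hc; omega, pow_succ]
  ring

end BinaryForm

theorem stmt_11_general (n d : ℕ)
    (g : ℕ → MvPolynomial (Fin (n + 1)) ℂ) :
    let S := MvPolynomial (Fin 2 ⊕ Fin (n + 1)) ℂ
    let x0 : S := X (Sum.inl 0)
    let x1 : S := X (Sum.inl 1)
    let G : ℕ → S := fun c => rename Sum.inr (g c)
    let r : S := ∑ c ∈ Finset.range (d + 1), G c * x0 ^ (d - c) * x1 ^ c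
    let N1 : ℕ → S := fun k => ∑ c ∈ Finset.Icc k d, G c * x0 ^ (d - c) * x1 ^ (c - k)
    let N2 : ℕ → S := fun k => ∑ c ∈ Finset.range k, G c * x0 ^ (k - 1 - c) * x1 ^ c
    -- smoothness of `Z` (Jacobian criterion, not needed for the algebraic identities):
    (∀ p : (Fin 2 ⊕ Fin (n + 1)) → ℂ, eval p r = 0 →
      ¬(p (Sum.inl 0) = 0 ∧ p (Sum.inl 1) = 0) → ¬(∀ j, p (Sum.inr j) = 0) →
      ∃ v, eval p (pderiv v r) ≠ 0) →
    (∀ k, 1 ≤ k → k ≤ d → x1 ^ k * N1 k + x0 ^ (d - k + 1) * N2 k = r) ∧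
    (∀ k, k ≤ d → x1 * N1 (k + 1) + G k * x0 ^ (d - k) = N1 k) := by
  intro S x0 x1 G r N1 N2 _
  exact ⟨fun k _ hk => BinaryForm.pow_mul_tail_add_pow_mul_head G x0 x1 hk,
    fun k hk => BinaryForm.mul_tail_succ_add G x0 x1 hk⟩

/-- Let `Z ⊂ ℙ¹ × ℙⁿ` (`n ≥ 3`) be a smooth hypersurface defined by
`r = g_0 x₀^d + g_1 x₀^{d-1} x₁ + … + g_d x₁^d` with `g_c` homogeneous of degree `e`
(smoothness is expressed by the Jacobian criterion on the affine cone).  For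
`1 ≤ k ≤ d` put `N₁(k) = Σ_{c=k}^{d} g_c x₀^{d-c} x₁^{c-k}` and
`N₂(k) = Σ_{c=0}^{k-1} g_c x₀^{k-1-c} x₁^c`, so that
`z_k = N₁(k)/x₀^{d-k+1} = -N₂(k)/x₁^k` on `Z`.  The identity
`x₁^k N₁(k) + x₀^{d-k+1} N₂(k) = r` shows that the two rational expressions agree on `Z`,
so `z_k` glues to a global section of `O_Z(-1, e)`; moreover
`x₁ N₁(k+1) + g_k x₀^{d-k} = N₁(k)` holds identically, which is the relation
`x₁ z_{k+1} + g_k - x₀ z_k = 0` on `Z` for `k = 0, …, d` (with `z_0 = z_{d+1} = 0`). -/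
theorem stmt_11 (n d e : ℕ) (hn : 3 ≤ n) (hd : 1 ≤ d) (he : 1 ≤ e)
    (g : ℕ → MvPolynomial (Fin (n + 1)) ℂ)
    (hhom : ∀ c ≤ d, g c ∈ homogeneousSubmodule (Fin (n + 1)) ℂ e) :
    let S := MvPolynomial (Fin 2 ⊕ Fin (n + 1)) ℂ
    let x0 : S := X (Sum.inl 0)
    let x1 : S := X (Sum.inl 1)
    let G : ℕ → S := fun c => rename Sum.inr (g c)
    let r : S := ∑ c ∈ Finset.range (d + 1), G c * x0 ^ (d - c) * x1 ^ c
    let N1 : ℕ → S := fun k => ∑ c ∈ Finset.Icc k d, G c * x0 ^ (d - c) * x1 ^ (c - k)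
    let N2 : ℕ → S := fun k => ∑ c ∈ Finset.range k, G c * x0 ^ (k - 1 - c) * x1 ^ c
    -- smoothness of `Z` (Jacobian criterion, not needed for the algebraic identities):
    (∀ p : (Fin 2 ⊕ Fin (n + 1)) → ℂ, eval p r = 0 →
      ¬(p (Sum.inl 0) = 0 ∧ p (Sum.inl 1) = 0) → ¬(∀ j, p (Sum.inr j) = 0) →
      ∃ v, eval p (pderiv v r) ≠ 0) →
    (∀ k, 1 ≤ k → k ≤ d → x1 ^ k * N1 k + x0 ^ (d - k + 1) * N2 k = r) ∧
    (∀ k, k ≤ d → x1 * N1 (k + 1) + G k * x0 ^ (d - k) = N1 k) :=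
  stmt_11_general n d g
end

section
/- Fix d ≥ 1 and let S = ℂ[Y_0,...,Y_d], with A_a : S^{a+d-1} → S^{a-1} the banded Koszul-type maps (entry Y_{t-s}). For 1 ≤ k ≤ d and a ≥ 1, define z̃_k : ker A_a → ker A_{a+1} by the formulas f'_m = f_m Y_k + ... + f_{m+d-k} Y_d (m ≤ a+k-1) and f'_m = -f_{m-k}Y_0 - ... - f_{m-1}Y_{k-1} (m ≥ k+1). Then for all 1 ≤ j, k ≤ d, the operators commute: z̃_j ∘ z̃_k = z̃_k ∘ z̃_j as maps ker A_a → ker A_{a+2}. -/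
open MvPolynomial

section Stmt12Aux
open Finset

namespace Stmt12

noncomputable def Yn (d : ℕ) : ℕ → MvPolynomial (Fin (d + 1)) ℂ :=
  fun j => if h : j ≤ d then X ⟨j, by omega⟩ else 0

noncomputable def Yi (d : ℕ) : ℤ → MvPolynomial (Fin (d + 1)) ℂ :=
  fun t => if 0 ≤ t then Yn d t.toNat else 0

lemma Yn_hi (d t : ℕ) (h : d < t) : Yn d t = 0 := dif_neg (by omega)

lemma Yi_coe (d i : ℕ) : Yi d (i : ℤ) = Yn d i := by simp [Yi]

lemma Yi_neg (d : ℕ) (t : ℤ) (h : t < 0) : Yi d t = 0 := if_neg (by omega)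

lemma Yi_hi (d : ℕ) (t : ℤ) (h : (d : ℤ) < t) : Yi d t = 0 := by
  unfold Yi
  rw [if_pos (by omega : (0:ℤ) ≤ t)]
  exact Yn_hi d _ (by omega)

noncomputable def Kk (d : ℕ) (f : ℤ → MvPolynomial (Fin (d + 1)) ℂ) (s : ℤ) :
    MvPolynomial (Fin (d + 1)) ℂ :=
  ∑ t ∈ Finset.range (d + 1), Yn d t * f (s + t)

noncomputable def Pp (d k : ℕ) (f : ℤ → MvPolynomial (Fin (d + 1)) ℂ) (m : ℤ) :
    MvPolynomial (Fin (d + 1)) ℂ :=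
  ∑ l ∈ Finset.range (d - k + 1), Yn d (k + l) * f (m + l)

noncomputable def Nn (d k : ℕ) (f : ℤ → MvPolynomial (Fin (d + 1)) ℂ) (m : ℤ) :
    MvPolynomial (Fin (d + 1)) ℂ :=
  -(∑ l ∈ Finset.range k, Yn d l * f (m - k + l))

noncomputable def ZT (d a k : ℕ) (f : ℤ → MvPolynomial (Fin (d + 1)) ℂ) (m : ℤ) :
    MvPolynomial (Fin (d + 1)) ℂ :=
  if 1 ≤ m ∧ m ≤ (a : ℤ) + k - 1 then
    ∑ l ∈ Finset.range (d - k + 1), Yn d (k + l) * f (m + l)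
  else if (k : ℤ) + 1 ≤ m ∧ m ≤ (a : ℤ) + d then
    -(∑ l ∈ Finset.range k, Yn d l * f (m - k + l))
  else 0

lemma sum_shift {M : Type*} [AddCommMonoid M] (F : ℤ → M) (c : ℤ) (r : ℕ) :
    ∑ i ∈ Finset.range r, F (c + i) = ∑ n ∈ Finset.Icc c (c + r - 1), F n := by
  induction r with
  | zero =>
      rw [Finset.range_zero, Finset.sum_empty, Finset.Icc_eq_empty (by omega), Finset.sum_empty]
  | succ r ih =>
      rw [Finset.sum_range_succ, ih,
        show Finset.Icc c (c + ((r : ℕ) + 1 : ℕ) - 1) = insert (c + r) (Finset.Icc c (c + r - 1)) by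
          ext x; simp only [Finset.mem_Icc, Finset.mem_insert]; omega,
        Finset.sum_insert (by simp only [Finset.mem_Icc]; omega)]
      exact add_comm _ _

section Main

variable {d a : ℕ} {f : ℤ → MvPolynomial (Fin (d + 1)) ℂ}

lemma K_hi (hsupp : ∀ m : ℤ, m < 1 ∨ (a : ℤ) + d - 1 < m → f m = 0) {s : ℤ}
    (hs : (a : ℤ) + d ≤ s) : Kk d f s = 0 := by
  apply Finset.sum_eq_zero
  intro t ht
  have ht' := Finset.mem_range.mp ht
  rw [hsupp _ (Or.inr (by omega)), mul_zero]

lemma K_lo {s : ℤ} (hsupp : ∀ m : ℤ, m < 1 ∨ (a : ℤ) + d - 1 < m → f m = 0)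
    (hs : s ≤ -(d : ℤ)) : Kk d f s = 0 := by
  apply Finset.sum_eq_zero
  intro t ht
  have ht' := Finset.mem_range.mp ht
  rw [hsupp _ (Or.inl (by omega)), mul_zero]

lemma P_eq_N_add {k : ℕ} (hkd : k ≤ d) (f : ℤ → MvPolynomial (Fin (d + 1)) ℂ) (m : ℤ) :
    Pp d k f m = Nn d k f m + Kk d f (m - k) := by
  have key : ∑ t ∈ Finset.range (d + 1), Yn d t * f (m - k + t)
      = (∑ t ∈ Finset.range k, Yn d t * f (m - k + t))
        + ∑ t ∈ Finset.range (d - k + 1), Yn d (k + t) * f (m - k + (k + t)) := by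
    have h := Finset.sum_range_add (fun t => Yn d t * f (m - k + t)) k (d - k + 1)
    rw [show k + (d - k + 1) = d + 1 by omega] at h
    exact h
  unfold Pp Nn Kk
  rw [key, neg_add_cancel_left]
  apply Finset.sum_congr rfl
  intro l _
  rw [show m - (k:ℤ) + ((k:ℤ) + l) = m + l by ring]

lemma ZT_pos {k : ℕ} (f : ℤ → MvPolynomial (Fin (d + 1)) ℂ) {m : ℤ} (h1 : 1 ≤ m)
    (h2 : m ≤ (a : ℤ) + k - 1) : ZT d a k f m = Pp d k f m := by
  unfold ZT Pp
  rw [if_pos ⟨h1, h2⟩]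

lemma ZT_negb {k : ℕ} (ha : 1 ≤ a) (f : ℤ → MvPolynomial (Fin (d + 1)) ℂ) {m : ℤ}
    (h1 : (a : ℤ) + k ≤ m) (h2 : m ≤ (a : ℤ) + d) : ZT d a k f m = Nn d k f m := by
  unfold ZT Nn
  rw [if_neg (by rintro ⟨_, h⟩; omega), if_pos ⟨by omega, h2⟩]

lemma ZT_eq_P_sub {k : ℕ} (ha : 1 ≤ a) (hkd : k ≤ d)
    (f : ℤ → MvPolynomial (Fin (d + 1)) ℂ) {m : ℤ} (h1 : 1 ≤ m) (h2 : m ≤ (a : ℤ) + d) :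
    ZT d a k f m = Pp d k f m - (if (a : ℤ) + k ≤ m then Kk d f (m - k) else 0) := by
  by_cases h : m ≤ (a : ℤ) + k - 1
  · rw [ZT_pos f h1 h, if_neg (by omega), sub_zero]
  · rw [ZT_negb ha f (by omega) h2, if_pos (by omega), P_eq_N_add hkd f m]
    ring

lemma ZT_eq_N_add {k : ℕ} (ha : 1 ≤ a) (hkd : k ≤ d)
    (f : ℤ → MvPolynomial (Fin (d + 1)) ℂ) {m : ℤ} (h1 : 1 ≤ m) (h2 : m ≤ (a : ℤ) + d) :
    ZT d a k f m = Nn d k f m + (if m ≤ (a : ℤ) + k - 1 then Kk d f (m - k) else 0) := by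
  by_cases h : m ≤ (a : ℤ) + k - 1
  · rw [ZT_pos f h1 h, if_pos h, P_eq_N_add hkd f m]
  · rw [ZT_negb ha f (by omega) h2, if_neg h, add_zero]

lemma ZT_outside {k : ℕ} (hkd : k ≤ d) (f : ℤ → MvPolynomial (Fin (d + 1)) ℂ) {m : ℤ}
    (h : m < 1 ∨ (a : ℤ) + d < m) : ZT d a k f m = 0 := by
  unfold ZT
  rw [if_neg (by rintro ⟨h1, h2⟩; omega), if_neg (by rintro ⟨h1, h2⟩; omega)]

end Main

noncomputable def PP (d j k : ℕ) (f : ℤ → MvPolynomial (Fin (d + 1)) ℂ) (m : ℤ) :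
    MvPolynomial (Fin (d + 1)) ℂ :=
  ∑ i ∈ Finset.range (d - j + 1), ∑ l ∈ Finset.range (d - k + 1),
    Yn d (j + i) * (Yn d (k + l) * f (m + i + l))

noncomputable def CC (d a j k : ℕ) (f : ℤ → MvPolynomial (Fin (d + 1)) ℂ) (m : ℤ) :
    MvPolynomial (Fin (d + 1)) ℂ :=
  ∑ n ∈ Finset.Icc (a : ℤ) ((a : ℤ) + d - 1), Yi d ((j : ℤ) + k + n - m) * Kk d f n

noncomputable def TT (d j k : ℕ) (f : ℤ → MvPolynomial (Fin (d + 1)) ℂ) (m : ℤ) :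
    MvPolynomial (Fin (d + 1)) ℂ :=
  ∑ i ∈ Finset.range j, ∑ l ∈ Finset.range k,
    Yn d i * (Yn d l * f (m - j - k + i + l))

noncomputable def DD (d j k : ℕ) (f : ℤ → MvPolynomial (Fin (d + 1)) ℂ) (m : ℤ) :
    MvPolynomial (Fin (d + 1)) ℂ :=
  ∑ n ∈ Finset.Icc (1 - (d : ℤ)) 0, Yi d ((j : ℤ) + k + n - m) * Kk d f n

noncomputable def MM (d j k : ℕ) (f : ℤ → MvPolynomial (Fin (d + 1)) ℂ) (m : ℤ) :
    MvPolynomial (Fin (d + 1)) ℂ :=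
  -(∑ i ∈ Finset.range (d - j + 1), ∑ l ∈ Finset.range k,
      Yn d (j + i) * (Yn d l * f (m + i - k + l)))

lemma PP_symm (d j k : ℕ) (f : ℤ → MvPolynomial (Fin (d + 1)) ℂ) (m : ℤ) :
    PP d j k f m = PP d k j f m := by
  unfold PP
  rw [Finset.sum_comm]
  apply Finset.sum_congr rfl; intro l _
  apply Finset.sum_congr rfl; intro i _
  rw [show m + (i : ℤ) + l = m + (l : ℤ) + i by ring, mul_left_comm]

lemma CC_symm (d a j k : ℕ) (f : ℤ → MvPolynomial (Fin (d + 1)) ℂ) (m : ℤ) :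
    CC d a j k f m = CC d a k j f m := by
  unfold CC
  apply Finset.sum_congr rfl; intro n _
  rw [show (j : ℤ) + k + n - m = (k : ℤ) + j + n - m by ring]

lemma TT_symm (d j k : ℕ) (f : ℤ → MvPolynomial (Fin (d + 1)) ℂ) (m : ℤ) :
    TT d j k f m = TT d k j f m := by
  unfold TT
  rw [Finset.sum_comm]
  apply Finset.sum_congr rfl; intro l _
  apply Finset.sum_congr rfl; intro i _
  rw [show m - (j : ℤ) - k + i + l = m - (k : ℤ) - j + l + i by ring, mul_left_comm]

lemma DD_symm (d j k : ℕ) (f : ℤ → MvPolynomial (Fin (d + 1)) ℂ) (m : ℤ) :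
    DD d j k f m = DD d k j f m := by
  unfold DD
  apply Finset.sum_congr rfl; intro n _
  rw [show (j : ℤ) + k + n - m = (k : ℤ) + j + n - m by ring]

section Regions

variable {d a j k : ℕ} {f : ℤ → MvPolynomial (Fin (d + 1)) ℂ} {m : ℤ}

lemma R2 (ha : 1 ≤ a) (hj1 : 1 ≤ j) (hjd : j ≤ d) (hk1 : 1 ≤ k) (hkd : k ≤ d)
    (h1 : (a : ℤ) + k + 1 ≤ m) (h2 : m ≤ (a : ℤ) + j) :
    ZT d (a + 1) j (ZT d a k f) m = MM d j k f m := by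
  rw [ZT_pos (a := a + 1) (k := j) _ (by omega) (by push_cast; omega)]
  unfold Pp
  have hstep : ∀ i ∈ Finset.range (d - j + 1),
      Yn d (j + i) * ZT d a k f (m + i)
      = -(∑ l ∈ Finset.range k, Yn d (j + i) * (Yn d l * f (m + i - k + l))) := by
    intro i hi
    have hi' := Finset.mem_range.mp hi
    rw [ZT_negb ha f (by omega) (by omega)]
    unfold Nn
    rw [mul_neg, Finset.mul_sum]
  rw [Finset.sum_congr rfl hstep, Finset.sum_neg_distrib]
  rfl

lemma R2' (ha : 1 ≤ a) (hj1 : 1 ≤ j) (hjd : j ≤ d) (hk1 : 1 ≤ k) (hkd : k ≤ d)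
    (h1 : (a : ℤ) + k + 1 ≤ m) (h2 : m ≤ (a : ℤ) + j) :
    ZT d (a + 1) k (ZT d a j f) m = MM d j k f m := by
  rw [ZT_negb (a := a + 1) (k := k) (by omega) _ (by push_cast; omega) (by push_cast; omega)]
  unfold Nn MM
  rw [neg_inj]
  have hstep : ∀ i ∈ Finset.range k,
      Yn d i * ZT d a j f (m - k + i)
      = ∑ l ∈ Finset.range (d - j + 1), Yn d i * (Yn d (j + l) * f (m - k + i + l)) := by
    intro i hi
    have hi' := Finset.mem_range.mp hi
    rw [ZT_pos f (by omega) (by omega)]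
    unfold Pp
    rw [Finset.mul_sum]
  rw [Finset.sum_congr rfl hstep, Finset.sum_comm]
  apply Finset.sum_congr rfl; intro p _
  apply Finset.sum_congr rfl; intro q _
  rw [show m - (k : ℤ) + q + p = m + (p : ℤ) - k + q by ring, mul_left_comm]

lemma R1 (ha : 1 ≤ a) (hj1 : 1 ≤ j) (hjd : j ≤ d) (hk1 : 1 ≤ k) (hkd : k ≤ d)
    (hsupp : ∀ m : ℤ, m < 1 ∨ (a : ℤ) + d - 1 < m → f m = 0)
    (hm1 : 1 ≤ m) (hmj : m ≤ (a : ℤ) + j) (hmk : m ≤ (a : ℤ) + k) :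
    ZT d (a + 1) j (ZT d a k f) m = PP d j k f m - CC d a j k f m := by
  rw [ZT_pos (a := a + 1) (k := j) _ hm1 (by push_cast; omega)]
  unfold Pp
  have hstep : ∀ i ∈ Finset.range (d - j + 1),
      Yn d (j + i) * ZT d a k f (m + i)
      = (∑ l ∈ Finset.range (d - k + 1), Yn d (j + i) * (Yn d (k + l) * f (m + i + l)))
        - Yn d (j + i) * (if (a : ℤ) + k ≤ m + i then Kk d f (m + i - k) else 0) := by
    intro i hi
    have hi' := Finset.mem_range.mp hi
    rw [ZT_eq_P_sub ha hkd f (by omega) (by omega), mul_sub]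
    congr 1
    unfold Pp
    rw [Finset.mul_sum]
  rw [Finset.sum_congr rfl hstep, Finset.sum_sub_distrib]
  congr 1
  calc
    ∑ i ∈ Finset.range (d - j + 1),
        Yn d (j + i) * (if (a : ℤ) + k ≤ m + i then Kk d f (m + i - k) else 0)
        = ∑ i ∈ Finset.range (d - j + 1),
            Yi d ((j : ℤ) + k + (m - k + i) - m)
              * (if (a : ℤ) ≤ m - k + i then Kk d f (m - k + i) else 0) := by
          apply Finset.sum_congr rfl; intro i hi
          rw [show (j : ℤ) + k + (m - k + i) - m = ((j + i : ℕ) : ℤ) by push_cast; ring, Yi_coe]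
          congr 1
          rw [show m + (i : ℤ) - k = m - k + i by ring]
          exact if_congr (by omega) rfl rfl
    _ = ∑ n ∈ Finset.Icc (m - k) (m - k + (d - j + 1 : ℕ) - 1),
          Yi d ((j : ℤ) + k + n - m) * (if (a : ℤ) ≤ n then Kk d f n else 0) :=
        sum_shift (fun n => Yi d ((j : ℤ) + k + n - m) * (if (a : ℤ) ≤ n then Kk d f n else 0))
          (m - k) (d - j + 1)
    _ = ∑ n ∈ Finset.Icc (min (m - k) (a : ℤ)) (max (m - k + (d - j + 1 : ℕ) - 1) ((a : ℤ) + d - 1)),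
          Yi d ((j : ℤ) + k + n - m) * (if (a : ℤ) ≤ n then Kk d f n else 0) := by
        apply Finset.sum_subset
        · intro x hx
          simp only [Finset.mem_Icc] at *
          omega
        · intro n hn hn'
          simp only [Finset.mem_Icc] at hn hn'
          by_cases hc : n < m - k
          · rw [if_neg (by omega), mul_zero]
          · rw [Yi_hi d _ (by omega), zero_mul]
    _ = ∑ n ∈ Finset.Icc (a : ℤ) ((a : ℤ) + d - 1),
          Yi d ((j : ℤ) + k + n - m) * (if (a : ℤ) ≤ n then Kk d f n else 0) := by
        symm
        apply Finset.sum_subset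
        · intro x hx
          simp only [Finset.mem_Icc] at *
          omega
        · intro n hn hn'
          simp only [Finset.mem_Icc] at hn hn'
          by_cases hc : n < (a : ℤ)
          · rw [if_neg (by omega), mul_zero]
          · rw [if_pos (by omega), K_hi hsupp (by omega), mul_zero]
    _ = CC d a j k f m := by
        unfold CC
        apply Finset.sum_congr rfl; intro n hn
        simp only [Finset.mem_Icc] at hn
        rw [if_pos hn.1]

lemma R3 (ha : 1 ≤ a) (hj1 : 1 ≤ j) (hjd : j ≤ d) (hk1 : 1 ≤ k) (hkd : k ≤ d)
    (hsupp : ∀ m : ℤ, m < 1 ∨ (a : ℤ) + d - 1 < m → f m = 0)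
    (hker : ∀ s : ℤ, 1 ≤ s → s ≤ (a : ℤ) - 1 → Kk d f s = 0)
    (hmj : (a : ℤ) + j + 1 ≤ m) (hmk : (a : ℤ) + k + 1 ≤ m) (hm : m ≤ (a : ℤ) + d + 1) :
    ZT d (a + 1) j (ZT d a k f) m = TT d j k f m - DD d j k f m := by
  rw [ZT_negb (a := a + 1) (k := j) (by omega) _ (by push_cast; omega) (by push_cast; omega)]
  unfold Nn
  have hstep : ∀ i ∈ Finset.range j,
      Yn d i * ZT d a k f (m - j + i)
      = -(∑ l ∈ Finset.range k, Yn d i * (Yn d l * f (m - j + i - k + l)))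
        + Yn d i * (if m - j + i ≤ (a : ℤ) + k - 1 then Kk d f (m - j + i - k) else 0) := by
    intro i hi
    have hi' := Finset.mem_range.mp hi
    rw [ZT_eq_N_add ha hkd f (by omega) (by omega), mul_add]
    congr 1
    unfold Nn
    rw [mul_neg, Finset.mul_sum]
  rw [Finset.sum_congr rfl hstep, Finset.sum_add_distrib, neg_add,
    sub_eq_add_neg (TT d j k f m) (DD d j k f m)]
  congr 1
  · rw [Finset.sum_neg_distrib, neg_neg]
    unfold TT
    apply Finset.sum_congr rfl; intro i _
    apply Finset.sum_congr rfl; intro l _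
    rw [show m - (j : ℤ) + i - k + l = m - (j : ℤ) - k + i + l by ring]
  · rw [neg_inj]
    calc
      ∑ i ∈ Finset.range j,
          Yn d i * (if m - j + i ≤ (a : ℤ) + k - 1 then Kk d f (m - j + i - k) else 0)
          = ∑ i ∈ Finset.range j,
              Yi d ((j : ℤ) + k + (m - j - k + i) - m)
                * (if m - j - k + i ≤ (a : ℤ) - 1 then Kk d f (m - j - k + i) else 0) := by
            apply Finset.sum_congr rfl; intro i hi
            rw [show (j : ℤ) + k + (m - j - k + i) - m = ((i : ℕ) : ℤ) by push_cast; ring, Yi_coe]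
            congr 1
            rw [show m - (j : ℤ) + i - k = m - j - k + i by ring]
            exact if_congr (by omega) rfl rfl
      _ = ∑ n ∈ Finset.Icc (m - j - k) (m - j - k + (j : ℕ) - 1),
            Yi d ((j : ℤ) + k + n - m) * (if n ≤ (a : ℤ) - 1 then Kk d f n else 0) :=
          sum_shift (fun n => Yi d ((j : ℤ) + k + n - m) * (if n ≤ (a : ℤ) - 1 then Kk d f n else 0))
            (m - j - k) j
      _ = ∑ n ∈ Finset.Icc (min (m - j - k) (1 - (d : ℤ))) (max (m - j - k + (j : ℕ) - 1) 0),
            Yi d ((j : ℤ) + k + n - m) * (if n ≤ (a : ℤ) - 1 then Kk d f n else 0) := by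
          apply Finset.sum_subset
          · intro x hx
            simp only [Finset.mem_Icc] at *
            omega
          · intro n hn hn'
            simp only [Finset.mem_Icc] at hn hn'
            by_cases hc : n < m - j - k
            · rw [Yi_neg d _ (by omega), zero_mul]
            · rw [if_neg (by omega), mul_zero]
      _ = ∑ n ∈ Finset.Icc (1 - (d : ℤ)) 0,
            Yi d ((j : ℤ) + k + n - m) * (if n ≤ (a : ℤ) - 1 then Kk d f n else 0) := by
          symm
          apply Finset.sum_subset
          · intro x hx
            simp only [Finset.mem_Icc] at *
            omega
          · intro n hn hn'
            simp only [Finset.mem_Icc] at hn hn'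
            by_cases hc : n < 1 - (d : ℤ)
            · by_cases h2 : n ≤ (a : ℤ) - 1
              · rw [if_pos h2, K_lo hsupp (by omega), mul_zero]
              · rw [if_neg h2, mul_zero]
            · by_cases h2 : n ≤ (a : ℤ) - 1
              · rw [if_pos h2, hker n (by omega) h2, mul_zero]
              · rw [if_neg h2, mul_zero]
      _ = DD d j k f m := by
          unfold DD
          apply Finset.sum_congr rfl; intro n hn
          simp only [Finset.mem_Icc] at hn
          rw [if_pos (by omega)]

lemma R0 (hjd : j ≤ d) (hkd : k ≤ d) (h : m < 1 ∨ (a : ℤ) + d + 1 < m) :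
    ZT d (a + 1) j (ZT d a k f) m = 0 :=
  ZT_outside hjd _ (by rcases h with h | h; exact Or.inl h; right; push_cast; omega)

end Regions

theorem main (d a : ℕ) (ha : 1 ≤ a) (f : ℤ → MvPolynomial (Fin (d + 1)) ℂ)
    (hsupp : ∀ m : ℤ, m < 1 ∨ (a : ℤ) + d - 1 < m → f m = 0)
    (hker : ∀ s : ℤ, 1 ≤ s → s ≤ (a : ℤ) - 1 → Kk d f s = 0)
    (j k : ℕ) (hj1 : 1 ≤ j) (hjd : j ≤ d) (hk1 : 1 ≤ k) (hkd : k ≤ d) :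
    ZT d (a + 1) j (ZT d a k f) = ZT d (a + 1) k (ZT d a j f) := by
  funext m
  by_cases h0 : 1 ≤ m ∧ m ≤ (a : ℤ) + d + 1
  · obtain ⟨hm1, hm2⟩ := h0
    by_cases hA : m ≤ (a : ℤ) + j ∧ m ≤ (a : ℤ) + k
    · rw [R1 ha hj1 hjd hk1 hkd hsupp hm1 hA.1 hA.2,
          R1 ha hk1 hkd hj1 hjd hsupp hm1 hA.2 hA.1,
          PP_symm d j k f m, CC_symm d a j k f m]
    · by_cases hB : (a : ℤ) + k + 1 ≤ m ∧ m ≤ (a : ℤ) + j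
      · rw [R2 ha hj1 hjd hk1 hkd hB.1 hB.2, R2' ha hj1 hjd hk1 hkd hB.1 hB.2]
      · by_cases hC : (a : ℤ) + j + 1 ≤ m ∧ m ≤ (a : ℤ) + k
        · rw [R2' ha hk1 hkd hj1 hjd hC.1 hC.2, R2 ha hk1 hkd hj1 hjd hC.1 hC.2]
        · rw [R3 ha hj1 hjd hk1 hkd hsupp hker (by omega) (by omega) (by omega),
              R3 ha hk1 hkd hj1 hjd hsupp hker (by omega) (by omega) (by omega),
              TT_symm d j k f m, DD_symm d j k f m]
  · rw [R0 hjd hkd (by omega), R0 hkd hjd (by omega)]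

end Stmt12

end Stmt12Aux

/-- Let `S = ℂ[Y_0, …, Y_d]` with the banded Koszul-type maps
`A_a : S^{a+d-1} → S^{a-1}` (encoded on functions `f : ℤ → S` supported on `[1, a+d-1]`,
kernel equations `Σ_{j=0}^{d} Y_j f(s+j) = 0` for `1 ≤ s ≤ a-1`).  For `1 ≤ k ≤ d` the
operator `z̃_k : ker A_a → ker A_{a+1}` is given by
`f'_m = Σ_{j=0}^{d-k} Y_{k+j} f_{m+j}` for `m ≤ a+k-1` and
`f'_m = -Σ_{j=0}^{k-1} Y_j f_{m-k+j}` for `m ≥ k+1` (the two agreeing on the overlap).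
Then for all `1 ≤ j, k ≤ d` the operators commute: `z̃_j ∘ z̃_k = z̃_k ∘ z̃_j` as maps
`ker A_a → ker A_{a+2}`. -/
theorem stmt_12 (d : ℕ) (hd : 1 ≤ d) (a : ℕ) (ha : 1 ≤ a) :
    let S := MvPolynomial (Fin (d + 1)) ℂ
    let Y : ℕ → S := fun j => if h : j ≤ d then X ⟨j, by omega⟩ else 0
    let zt : ℕ → ℕ → (ℤ → S) → (ℤ → S) := fun a' k f m =>
      if 1 ≤ m ∧ m ≤ (a' : ℤ) + k - 1 then
        ∑ j ∈ Finset.range (d - k + 1), Y (k + j) * f (m + j)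
      else if (k : ℤ) + 1 ≤ m ∧ m ≤ (a' : ℤ) + d then
        -(∑ j ∈ Finset.range k, Y j * f (m - k + j))
      else 0
    ∀ f : ℤ → S,
      (∀ m : ℤ, m < 1 ∨ (a : ℤ) + d - 1 < m → f m = 0) →
      (∀ s : ℤ, 1 ≤ s → s ≤ (a : ℤ) - 1 →
        ∑ j ∈ Finset.range (d + 1), Y j * f (s + j) = 0) →
      ∀ j k : ℕ, 1 ≤ j → j ≤ d → 1 ≤ k → k ≤ d →
        zt (a + 1) j (zt a k f) = zt (a + 1) k (zt a j f) := by
  intro S Y zt f hsupp hker j k hj1 hjd hk1 hkd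
  exact Stmt12.main d a ha f hsupp hker j k hj1 hjd hk1 hkd
end
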